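/- arXiv:1804.10407 — 4 statements merged into one kernel-verified Lean document; each statement's English description precedes it below -/
import Mathlib

section
/- Let A ∈ ℂ^{n×n} be nonzero and suppose there exists a unit vector z with |⟨Az, z⟩| = r(A) and ⟨Ax, x⟩ = 0, where z = x + y is the orthogonal decomposition with x ∈ range(A*) and y ∈ ker(A). Then ‖A‖ = 2·r(A). -/
/-!
Over `ℂ`, polarization bounds every `⟪T v, u⟫` by `r (‖u‖² + ‖v‖²)`, where `r` bounds the quadratic
form `w ↦ ⟪w, T w⟫` on the unit sphere; hence `‖T‖ ≤ 2 r` always. Conversely, `x ⊥ y` because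
`range T† ⊥ ker T`, so `T y = 0` and `⟪x, T x⟫ = 0` leave `⟪z, T z⟫ = ⟪y, T x⟫`, of modulus at most
`‖T‖ ‖x‖ ‖y‖ ≤ ‖T‖ (‖x‖² + ‖y‖²) / 2 = ‖T‖ / 2`.
-/

open scoped InnerProductSpace

noncomputable def toCLM {n : ℕ} (A : Matrix (Fin n) (Fin n) ℂ) :
    EuclideanSpace ℂ (Fin n) →L[ℂ] EuclideanSpace ℂ (Fin n) :=
  Matrix.toEuclideanCLM (𝕜 := ℂ) A

noncomputable def opNorm {n : ℕ} (A : Matrix (Fin n) (Fin n) ℂ) : ℝ := ‖toCLM A‖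

noncomputable def numRadius {n : ℕ} (A : Matrix (Fin n) (Fin n) ℂ) : ℝ :=
  sSup {r : ℝ | ∃ z : EuclideanSpace ℂ (Fin n), ‖z‖ = 1 ∧ r = ‖(⟪z, toCLM A z⟫_ℂ)‖}

namespace ContinuousLinearMap

section RCLike

variable {𝕜 E : Type*} [RCLike 𝕜] [NormedAddCommGroup E] [InnerProductSpace 𝕜 E]

theorem inner_eq_zero_of_mem_range_adjoint {F : Type*} [NormedAddCommGroup F]
    [InnerProductSpace 𝕜 F] [CompleteSpace E] [CompleteSpace F] {T : E →L[𝕜] F} {x y : E}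
    (hx : x ∈ LinearMap.range (adjoint T : F →ₗ[𝕜] E)) (hy : T y = 0) : ⟪x, y⟫_𝕜 = 0 := by
  obtain ⟨u, rfl⟩ := hx
  rw [coe_coe, adjoint_inner_left, hy, inner_zero_right]

theorem two_mul_norm_inner_add_le_of_inner_eq_zero (T : E →L[𝕜] E) {x y : E}
    (hxy : ⟪x, y⟫_𝕜 = 0) (hy : T y = 0) (hxx : ⟪x, T x⟫_𝕜 = 0) :
    2 * ‖⟪x + y, T (x + y)⟫_𝕜‖ ≤ ‖T‖ * ‖x + y‖ ^ 2 := by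
  have hinner : ⟪x + y, T (x + y)⟫_𝕜 = ⟪y, T x⟫_𝕜 := by
    rw [map_add, hy, add_zero, inner_add_left, hxx, zero_add]
  have hpyth : ‖x + y‖ ^ 2 = ‖x‖ ^ 2 + ‖y‖ ^ 2 := by
    rw [sq, sq, sq, norm_add_sq_eq_norm_sq_add_norm_sq_of_inner_eq_zero x y hxy]
  calc 2 * ‖⟪x + y, T (x + y)⟫_𝕜‖ ≤ 2 * (‖y‖ * (‖T‖ * ‖x‖)) := by
        rw [hinner]
        gcongr
        exact (norm_inner_le_norm y (T x)).trans (by gcongr; exact T.le_opNorm x)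
    _ = ‖T‖ * (2 * ‖x‖ * ‖y‖) := by ring
    _ ≤ ‖T‖ * ‖x + y‖ ^ 2 := by
        rw [hpyth]
        gcongr
        exact two_mul_le_add_sq _ _

end RCLike

section Complex

variable {E : Type*} [NormedAddCommGroup E] [InnerProductSpace ℂ E] {T : E →L[ℂ] E} {r : ℝ}

theorem norm_inner_le_of_norm_inner_self_le (h : ∀ w, ‖⟪w, T w⟫_ℂ‖ ≤ r * ‖w‖ ^ 2) (u v : E) :
    ‖⟪T v, u⟫_ℂ‖ ≤ r * (‖u‖ ^ 2 + ‖v‖ ^ 2) := by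
  have hq : ∀ w, ‖⟪T w, w⟫_ℂ‖ ≤ r * ‖w‖ ^ 2 := fun w =>
    (norm_inner_symm (T w) w).trans_le (h w)
  have hpar : ∀ a b : E, ‖a + b‖ ^ 2 + ‖a - b‖ ^ 2 = 2 * (‖a‖ ^ 2 + ‖b‖ ^ 2) := fun a b => by
    simpa only [sq] using parallelogram_law_with_norm ℂ a b
  have hIv : ‖Complex.I • v‖ ^ 2 = ‖v‖ ^ 2 := by simp [norm_smul]
  have hpol := inner_map_polarization T.toLinearMap u v
  simp only [coe_coe] at hpol
  rw [hpol, norm_div, RCLike.norm_ofNat, div_le_iff₀ (by norm_num : (0 : ℝ) < 4)]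
  calc _ ≤ ‖⟪T (u + v), u + v⟫_ℂ‖ + ‖⟪T (u - v), u - v⟫_ℂ‖
        + ‖Complex.I * ⟪T (u + Complex.I • v), u + Complex.I • v⟫_ℂ‖
        + ‖Complex.I * ⟪T (u - Complex.I • v), u - Complex.I • v⟫_ℂ‖ :=
        norm_sub_le_of_le (norm_add_le_of_le (norm_sub_le _ _) le_rfl) le_rfl
    _ ≤ r * ‖u + v‖ ^ 2 + r * ‖u - v‖ ^ 2 + r * ‖u + Complex.I • v‖ ^ 2
        + r * ‖u - Complex.I • v‖ ^ 2 := by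
        simp only [norm_mul, Complex.norm_I, one_mul]
        gcongr <;> exact hq _
    _ = r * (‖u‖ ^ 2 + ‖v‖ ^ 2) * 4 := by
        linear_combination r * hpar u v + r * hpar u (Complex.I • v) + 2 * r * hIv

theorem norm_le_two_mul_of_norm_inner_self_le (hr : 0 ≤ r)
    (h : ∀ w, ‖⟪w, T w⟫_ℂ‖ ≤ r * ‖w‖ ^ 2) : ‖T‖ ≤ 2 * r := by
  refine opNorm_le_of_re_inner_le (by positivity) fun v u hv hu => ?_
  calc RCLike.re ⟪T v, u⟫_ℂ ≤ ‖⟪T v, u⟫_ℂ‖ := RCLike.re_le_norm _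
    _ ≤ r * (‖u‖ ^ 2 + ‖v‖ ^ 2) := norm_inner_le_of_norm_inner_self_le h u v
    _ = 2 * r := by rw [hu, hv]; ring

end Complex

end ContinuousLinearMap

section NumRadius

variable {n : ℕ} (A : Matrix (Fin n) (Fin n) ℂ)

theorem numRadius_nonneg : 0 ≤ numRadius A :=
  Real.sSup_nonneg fun _ ⟨_, _, hr⟩ => hr ▸ norm_nonneg _

theorem norm_inner_self_le_numRadius_mul (w : EuclideanSpace ℂ (Fin n)) :
    ‖⟪w, toCLM A w⟫_ℂ‖ ≤ numRadius A * ‖w‖ ^ 2 := by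
  have hbdd : BddAbove {r : ℝ | ∃ z : EuclideanSpace ℂ (Fin n), ‖z‖ = 1 ∧
      r = ‖(⟪z, toCLM A z⟫_ℂ)‖} := by
    refine ⟨‖toCLM A‖, ?_⟩
    rintro _ ⟨z, hz, rfl⟩
    simpa [hz] using (norm_inner_le_norm z _).trans (mul_le_mul_of_nonneg_left
      ((toCLM A).le_opNorm z) (norm_nonneg z))
  rcases eq_or_ne w 0 with rfl | hw
  · simp
  have hw' : 0 < ‖w‖ := norm_pos_iff.mpr hw
  have hunit : ‖(‖w‖⁻¹ : ℂ) • w‖ = 1 := by simp [norm_smul, hw'.ne']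
  have hle := le_csSup hbdd ⟨_, hunit, rfl⟩
  rw [map_smul, inner_smul_left, inner_smul_right, norm_mul, norm_mul, Complex.norm_conj,
    norm_inv, Complex.norm_real, Real.norm_of_nonneg hw'.le, ← mul_assoc, ← mul_inv,
    inv_mul_le_iff₀ (by positivity)] at hle
  rwa [← sq, mul_comm] at hle

end NumRadius

theorem stmt3_general {n : ℕ} (A : Matrix (Fin n) (Fin n) ℂ)
    (z x y : EuclideanSpace ℂ (Fin n)) (hz : ‖z‖ = 1) (hdec : z = x + y)
    (hx : x ∈ LinearMap.range (ContinuousLinearMap.adjoint (toCLM A) : EuclideanSpace ℂ (Fin n) →ₗ[ℂ] EuclideanSpace ℂ (Fin n)))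
    (hy : toCLM A y = 0)
    (hmax : ‖⟪z, toCLM A z⟫_ℂ‖ = numRadius A)
    (hxx : ⟪x, toCLM A x⟫_ℂ = 0) :
    opNorm A = 2 * numRadius A := by
  refine le_antisymm ((toCLM A).norm_le_two_mul_of_norm_inner_self_le (numRadius_nonneg A)
    (norm_inner_self_le_numRadius_mul A)) ?_
  have hbound := (toCLM A).two_mul_norm_inner_add_le_of_inner_eq_zero
    (ContinuousLinearMap.inner_eq_zero_of_mem_range_adjoint hx hy) hy hxx
  rw [← hdec, hz, hmax, one_pow, mul_one] at hbound
  exact hbound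

theorem stmt3 {n : ℕ} (A : Matrix (Fin n) (Fin n) ℂ) (hA : A ≠ 0)
    (z x y : EuclideanSpace ℂ (Fin n)) (hz : ‖z‖ = 1) (hdec : z = x + y)
    (hx : x ∈ LinearMap.range (ContinuousLinearMap.adjoint (toCLM A) : EuclideanSpace ℂ (Fin n) →ₗ[ℂ] EuclideanSpace ℂ (Fin n)))
    (hy : toCLM A y = 0)
    (hmax : ‖⟪z, toCLM A z⟫_ℂ‖ = numRadius A)
    (hxx : ⟪x, toCLM A x⟫_ℂ = 0) :
    opNorm A = 2 * numRadius A :=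
  stmt3_general A z x y hz hdec hx hy hmax hxx
end

section
/- If the matrix A/‖A‖ is unitarily similar to the block-diagonal matrix diag(J, B) where J = [[0,1],[0,0]] and r(B) ≤ 1/2, then ‖A‖ = 2·r(A). -/
/-!
The numerical radius is homogeneous and invariant under unitary similarity, so
`r(A) = ‖A‖ · r(J ⊕ B)`. On a direct sum the quadratic form splits as
`⟪x, (C ⊕ D) x⟫ = ⟪u, C u⟫ + ⟪v, D v⟫` with `‖x‖² = ‖u‖² + ‖v‖²`, whence
`r(C ⊕ D) = max (r C) (r D)`. Finally `r(J) = 1/2`, because `|x̄₀ x₁| ≤ (|x₀|² + |x₁|²) / 2`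
with equality at `x = (1, 1)`; so `r(J ⊕ B) = 1/2` and `‖A‖ = 2 r(A)`.
-/

open scoped InnerProductSpace

def J : Matrix (Fin 2) (Fin 2) ℂ := !![0, 1; 0, 0]

open Metric

section NumericalRadius

variable {E F : Type*} [NormedAddCommGroup E] [InnerProductSpace ℂ E]
  [NormedAddCommGroup F] [InnerProductSpace ℂ F]

noncomputable def numericalRadius (T : E →L[ℂ] E) : ℝ :=
  sSup ((fun x => ‖⟪x, T x⟫_ℂ‖) '' sphere 0 1)

lemma bddAbove_norm_inner_apply_image_sphere (T : E →L[ℂ] E) :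
    BddAbove ((fun x => ‖⟪x, T x⟫_ℂ‖) '' sphere 0 1) := by
  refine ⟨‖T‖, ?_⟩
  rintro _ ⟨x, hx, rfl⟩
  rw [mem_sphere_zero_iff_norm] at hx
  calc ‖⟪x, T x⟫_ℂ‖ ≤ ‖x‖ * ‖T x‖ := norm_inner_le_norm _ _
    _ ≤ ‖x‖ * (‖T‖ * ‖x‖) := by gcongr; exact T.le_opNorm x
    _ = ‖T‖ := by rw [hx]; ring

lemma norm_inner_apply_le_numericalRadius (T : E →L[ℂ] E) {x : E} (hx : ‖x‖ = 1) :
    ‖⟪x, T x⟫_ℂ‖ ≤ numericalRadius T :=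
  le_csSup (bddAbove_norm_inner_apply_image_sphere T) ⟨x, mem_sphere_zero_iff_norm.2 hx, rfl⟩

lemma numericalRadius_le (T : E →L[ℂ] E) {r : ℝ} (hr : 0 ≤ r)
    (h : ∀ x : E, ‖x‖ = 1 → ‖⟪x, T x⟫_ℂ‖ ≤ r) : numericalRadius T ≤ r :=
  Real.sSup_le (by rintro _ ⟨x, hx, rfl⟩; exact h x (mem_sphere_zero_iff_norm.1 hx)) hr

lemma numericalRadius_nonneg (T : E →L[ℂ] E) : 0 ≤ numericalRadius T :=
  Real.sSup_nonneg (by rintro _ ⟨x, -, rfl⟩; positivity)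

lemma numericalRadius_le_of_forall_exists {S : F →L[ℂ] F} {T : E →L[ℂ] E}
    (h : ∀ x : F, ‖x‖ = 1 → ∃ y : E, ‖y‖ = 1 ∧ ‖⟪x, S x⟫_ℂ‖ = ‖⟪y, T y⟫_ℂ‖) :
    numericalRadius S ≤ numericalRadius T := by
  refine numericalRadius_le S (numericalRadius_nonneg T) fun x hx => ?_
  obtain ⟨y, hy, hxy⟩ := h x hx
  exact hxy ▸ norm_inner_apply_le_numericalRadius T hy

lemma norm_inner_apply_le_numericalRadius_mul_sq (T : E →L[ℂ] E) (x : E) :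
    ‖⟪x, T x⟫_ℂ‖ ≤ numericalRadius T * ‖x‖ ^ 2 := by
  rcases eq_or_ne x 0 with rfl | hx
  · simp
  have hx' : ‖x‖ ≠ 0 := norm_ne_zero_iff.2 hx
  have hunit : ‖(‖x‖⁻¹ : ℂ) • x‖ = 1 := by
    rw [norm_smul, norm_inv, Complex.norm_real, norm_norm, inv_mul_cancel₀ hx']
  have h := norm_inner_apply_le_numericalRadius T hunit
  rw [map_smul, inner_smul_left, inner_smul_right, norm_mul, norm_mul, Complex.norm_conj,
    norm_inv, Complex.norm_real, norm_norm, ← mul_assoc] at h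
  calc ‖⟪x, T x⟫_ℂ‖ = ‖x‖⁻¹ * ‖x‖⁻¹ * ‖⟪x, T x⟫_ℂ‖ * ‖x‖ ^ 2 := by field_simp
    _ ≤ numericalRadius T * ‖x‖ ^ 2 := by gcongr

lemma numericalRadius_smul (c : ℂ) (T : E →L[ℂ] E) :
    numericalRadius (c • T) = ‖c‖ * numericalRadius T := by
  rw [numericalRadius, numericalRadius, ← smul_eq_mul, ← Real.sSup_smul_of_nonneg (norm_nonneg c),
    ← Set.image_smul, Set.image_image]
  simp only [smul_apply, inner_smul_right, norm_mul, smul_eq_mul]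

variable [CompleteSpace E]

lemma numericalRadius_unitary_conj_le {U : E →L[ℂ] E} (hU : U ∈ unitary (E →L[ℂ] E))
    (T : E →L[ℂ] E) : numericalRadius (U * T * star U) ≤ numericalRadius T := by
  refine numericalRadius_le_of_forall_exists fun x hx => ⟨star U x, ?_, ?_⟩
  · rw [ContinuousLinearMap.norm_map_of_mem_unitary (Unitary.star_mem hU), hx]
  · change ‖⟪x, U (T (star U x))⟫_ℂ‖ = _
    rw [← ContinuousLinearMap.adjoint_inner_left, ← ContinuousLinearMap.star_eq_adjoint]

lemma numericalRadius_unitary_conj {U : E →L[ℂ] E} (hU : U ∈ unitary (E →L[ℂ] E))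
    (T : E →L[ℂ] E) : numericalRadius (U * T * star U) = numericalRadius T := by
  refine (numericalRadius_unitary_conj_le hU T).antisymm ?_
  have hT : T = star U * (U * T * star U) * star (star U) := by
    rw [star_star, ← mul_assoc, ← mul_assoc, Unitary.star_mul_self_of_mem hU, one_mul, mul_assoc,
      Unitary.star_mul_self_of_mem hU, mul_one]
  conv_lhs => rw [hT]
  exact numericalRadius_unitary_conj_le (Unitary.star_mem hU) _

end NumericalRadius

lemma numRadius_eq_numericalRadius {n : ℕ} (A : Matrix (Fin n) (Fin n) ℂ) :
    numRadius A = numericalRadius (toCLM A) := by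
  simp only [numRadius, numericalRadius, Set.image, mem_sphere_zero_iff_norm, eq_comm]

section Blocks

variable {n k m : ℕ} (e : Fin n ≃ Fin k ⊕ Fin m)

def inlPart (x : EuclideanSpace ℂ (Fin n)) : EuclideanSpace ℂ (Fin k) :=
  WithLp.toLp 2 fun i => x (e.symm (.inl i))

def inrPart (x : EuclideanSpace ℂ (Fin n)) : EuclideanSpace ℂ (Fin m) :=
  WithLp.toLp 2 fun i => x (e.symm (.inr i))

def ofParts (u : EuclideanSpace ℂ (Fin k)) (v : EuclideanSpace ℂ (Fin m)) :
    EuclideanSpace ℂ (Fin n) :=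
  WithLp.toLp 2 fun j => Sum.elim u.ofLp v.ofLp (e j)

@[simp]
lemma inlPart_ofParts (u : EuclideanSpace ℂ (Fin k)) (v : EuclideanSpace ℂ (Fin m)) :
    inlPart e (ofParts e u v) = u := by
  simp [inlPart, ofParts]

@[simp]
lemma inrPart_ofParts (u : EuclideanSpace ℂ (Fin k)) (v : EuclideanSpace ℂ (Fin m)) :
    inrPart e (ofParts e u v) = v := by
  simp [inrPart, ofParts]

lemma norm_sq_eq_inlPart_add_inrPart (x : EuclideanSpace ℂ (Fin n)) :
    ‖x‖ ^ 2 = ‖inlPart e x‖ ^ 2 + ‖inrPart e x‖ ^ 2 := by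
  simp only [EuclideanSpace.norm_sq_eq, inlPart, inrPart]
  rw [← Fintype.sum_sum_type (f := fun p => ‖x (e.symm p)‖ ^ 2)]
  exact (e.symm.sum_comp fun j => ‖x j‖ ^ 2).symm

lemma norm_ofParts_sq (u : EuclideanSpace ℂ (Fin k)) (v : EuclideanSpace ℂ (Fin m)) :
    ‖ofParts e u v‖ ^ 2 = ‖u‖ ^ 2 + ‖v‖ ^ 2 := by
  rw [norm_sq_eq_inlPart_add_inrPart, inlPart_ofParts, inrPart_ofParts]

lemma inner_toCLM_reindex_fromBlocks (C : Matrix (Fin k) (Fin k) ℂ) (D : Matrix (Fin m) (Fin m) ℂ)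
    (x : EuclideanSpace ℂ (Fin n)) :
    ⟪x, toCLM (Matrix.reindex e.symm e.symm (Matrix.fromBlocks C 0 0 D)) x⟫_ℂ =
      ⟪inlPart e x, toCLM C (inlPart e x)⟫_ℂ + ⟪inrPart e x, toCLM D (inrPart e x)⟫_ℂ := by
  simp only [toCLM, EuclideanSpace.inner_eq_star_dotProduct, Matrix.ofLp_toEuclideanCLM,
    Matrix.reindex_apply, Matrix.submatrix_mulVec_equiv, dotProduct]
  rw [← e.symm.sum_comp, Fintype.sum_sum_type]
  simp [Matrix.fromBlocks_mulVec, inlPart, inrPart, Function.comp_def]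

lemma numRadius_reindex_fromBlocks (C : Matrix (Fin k) (Fin k) ℂ) (D : Matrix (Fin m) (Fin m) ℂ) :
    numRadius (Matrix.reindex e.symm e.symm (Matrix.fromBlocks C 0 0 D)) =
      max (numRadius C) (numRadius D) := by
  simp only [numRadius_eq_numericalRadius]
  refine le_antisymm ?_ (max_le ?_ ?_)
  · refine numericalRadius_le _ (le_max_of_le_left (numericalRadius_nonneg _)) fun x hx => ?_
    rw [inner_toCLM_reindex_fromBlocks]
    calc _ ≤ ‖⟪inlPart e x, toCLM C (inlPart e x)⟫_ℂ‖ + ‖⟪inrPart e x, toCLM D (inrPart e x)⟫_ℂ‖ :=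
          norm_add_le _ _
      _ ≤ numericalRadius (toCLM C) * ‖inlPart e x‖ ^ 2 +
            numericalRadius (toCLM D) * ‖inrPart e x‖ ^ 2 := by
          gcongr <;> exact norm_inner_apply_le_numericalRadius_mul_sq _ _
      _ ≤ max (numericalRadius (toCLM C)) (numericalRadius (toCLM D)) *
            (‖inlPart e x‖ ^ 2 + ‖inrPart e x‖ ^ 2) := by
          rw [mul_add]; gcongr; exacts [le_max_left _ _, le_max_right _ _]
      _ = _ := by rw [← norm_sq_eq_inlPart_add_inrPart, hx, one_pow, mul_one]
  · refine numericalRadius_le_of_forall_exists fun u hu => ⟨ofParts e u 0, ?_, ?_⟩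
    · rw [← pow_eq_one_iff_of_nonneg (norm_nonneg _) two_ne_zero, norm_ofParts_sq]
      simp [hu]
    · rw [inner_toCLM_reindex_fromBlocks]
      simp
  · refine numericalRadius_le_of_forall_exists fun u hu => ⟨ofParts e 0 u, ?_, ?_⟩
    · rw [← pow_eq_one_iff_of_nonneg (norm_nonneg _) two_ne_zero, norm_ofParts_sq]
      simp [hu]
    · rw [inner_toCLM_reindex_fromBlocks]
      simp

end Blocks

lemma inner_toCLM_J (x : EuclideanSpace ℂ (Fin 2)) :
    ⟪x, toCLM J x⟫_ℂ = starRingEnd ℂ (x 0) * x 1 := by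
  simp [toCLM, J, EuclideanSpace.inner_eq_star_dotProduct, dotProduct, Fin.sum_univ_two, mul_comm]

lemma numRadius_J : numRadius J = 1 / 2 := by
  rw [numRadius_eq_numericalRadius]
  refine le_antisymm (numericalRadius_le _ (by norm_num) fun x hx => ?_) ?_
  · have hx2 : ‖x‖ ^ 2 = ‖x 0‖ ^ 2 + ‖x 1‖ ^ 2 := by
      rw [EuclideanSpace.norm_sq_eq, Fin.sum_univ_two]
    rw [inner_toCLM_J, norm_mul, Complex.norm_conj]
    nlinarith [sq_nonneg (‖x 0‖ - ‖x 1‖)]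
  · have h := norm_inner_apply_le_numericalRadius_mul_sq (toCLM J) (WithLp.toLp 2 ![1, 1])
    simp [inner_toCLM_J, EuclideanSpace.norm_sq_eq, Fin.sum_univ_two] at h
    linarith

theorem stmt7 {n m : ℕ} (A : Matrix (Fin n) (Fin n) ℂ) (hA : A ≠ 0)
    (B : Matrix (Fin m) (Fin m) ℂ) (e : Fin n ≃ Fin 2 ⊕ Fin m)
    (Q : Matrix (Fin n) (Fin n) ℂ) (hQ : Q ∈ Matrix.unitaryGroup (Fin n) ℂ)
    (hsim : (opNorm A)⁻¹ • A =
      Q * (Matrix.reindex e.symm e.symm (Matrix.fromBlocks J 0 0 B)) * star Q)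
    (hB : numRadius B ≤ 1 / 2) :
    opNorm A = 2 * numRadius A := by
  set M := Matrix.reindex e.symm e.symm (Matrix.fromBlocks J 0 0 B)
  have hN : 0 < opNorm A := by
    rw [opNorm, norm_pos_iff, toCLM]
    exact EmbeddingLike.map_ne_zero_iff.2 hA
  have hA' : toCLM A = (opNorm A : ℂ) • (toCLM Q * toCLM M * star (toCLM Q)) := by
    nth_rewrite 1 [(inv_smul_eq_iff₀ hN.ne').1 hsim]
    rw [← Complex.coe_smul]
    simp only [toCLM, map_smul, map_mul, map_star]
  have hQ' : toCLM Q ∈ unitary _ := Unitary.map_mem Matrix.toEuclideanCLM hQ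
  rw [numRadius_eq_numericalRadius, hA', numericalRadius_smul, numericalRadius_unitary_conj hQ',
    ← numRadius_eq_numericalRadius, numRadius_reindex_fromBlocks, numRadius_J, max_eq_left hB,
    Complex.norm_real, Real.norm_of_nonneg hN.le]
  ring
end

section
/- Let A ∈ ℂ^{n×n} with ‖A‖ = 2·r(A) and let m be the dimension of the maximum right singular subspace V_max(A) = {x : ‖Ax‖ = ‖A‖‖x‖}. Then m ≤ n/2. -/
open scoped InnerProductSpace

/-!
Put `k = ‖T‖` and assume `‖⟪z, T z⟫‖ ≤ (k / 2) ‖z‖²` for all `z`. If `‖T x‖ = k ‖x‖`, then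
`T† T x = k² x`, so `y = T x / k` satisfies `T† y = k x` and `‖y‖ = ‖x‖`. Testing the bound on
`x + c y` for all unimodular `c` (only the phases `±1, ±i` are needed) forces
`⟪x, T x⟫ + ⟪y, T y⟫ = k ⟪x, y⟫`, while `⟪y, T y⟫ = ⟪T† y, y⟫ = k ⟪x, y⟫`; hence `⟪x, T x⟫ = 0`.
The vectors attaining the norm form the eigenspace `V` of `T† T` for `k²`, so by polarization `T`
maps `V` into `Vᗮ`, injectively since `k > 0`, and `2 dim V ≤ n`.
-/

open scoped InnerProduct ComplexConjugate

theorem Complex.eq_zero_of_forall_re_mul_add_sq_mul_nonpos {α β : ℂ}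
    (h : ∀ c : ℂ, ‖c‖ = 1 → (c * α + c ^ 2 * β).re ≤ 0) : α = 0 := by
  have h1 := h 1 (by simp)
  have h2 := h (-1) (by simp)
  have h3 := h I (by simp)
  have h4 := h (-I) (by simp)
  simp only [one_mul, add_re, neg_mul, sq, mul_neg, mul_one, neg_neg, neg_re, I_mul_I, mul_re,
    I_re, zero_mul, I_im, zero_sub] at h1 h2 h3 h4
  apply Complex.ext <;> simp only [zero_re, zero_im] <;> linarith

section
variable {𝕜 E F : Type*} [RCLike 𝕜] [NormedAddCommGroup E] [InnerProductSpace 𝕜 E]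
  [NormedAddCommGroup F] [InnerProductSpace 𝕜 F]

open ContinuousLinearMap RCLike in
theorem ContinuousLinearMap.norm_apply_eq_opNorm_mul_iff [CompleteSpace E] [CompleteSpace F]
    (T : E →L[𝕜] F) (x : E) :
    ‖T x‖ = ‖T‖ * ‖x‖ ↔ (T† ∘L T) x = ((‖T‖ ^ 2 : ℝ) : 𝕜) • x := by
  have hTx := T.apply_norm_sq_eq_inner_adjoint_right x
  constructor
  · intro hx
    have hle : ‖(T† ∘L T) x‖ ≤ ‖T‖ ^ 2 * ‖x‖ := by
      simpa only [norm_adjoint_comp_self, sq] using (T† ∘L T).le_opNorm x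
    have hdist : ‖(T† ∘L T) x - ((‖T‖ ^ 2 : ℝ) : 𝕜) • x‖ ^ 2 ≤ 0 := by
      rw [norm_sub_sq (𝕜 := 𝕜), inner_smul_right, re_ofReal_mul, ← inner_conj_symm, conj_re,
        ← hTx, norm_smul, norm_ofReal, abs_sq, hx]
      nlinarith [norm_nonneg ((T† ∘L T) x), norm_nonneg x, sq_nonneg ‖T‖]
    rw [← sub_eq_zero, ← norm_eq_zero]
    exact pow_eq_zero_iff two_ne_zero |>.mp (le_antisymm hdist (sq_nonneg _))
  · intro hx
    rw [hx, inner_smul_right, re_ofReal_mul, inner_self_eq_norm_sq, ← mul_pow] at hTx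
    exact (sq_eq_sq₀ (norm_nonneg _) (by positivity)).mp hTx

theorem ContinuousLinearMap.span_setOf_norm_apply_eq [CompleteSpace E] [CompleteSpace F]
    (T : E →L[𝕜] F) :
    Submodule.span 𝕜 {x | ‖T x‖ = ‖T‖ * ‖x‖} =
      Module.End.eigenspace ((T† ∘L T : E →L[𝕜] E) : E →ₗ[𝕜] E) ((‖T‖ ^ 2 : ℝ) : 𝕜) := by
  have hset : {x | ‖T x‖ = ‖T‖ * ‖x‖} =
      (Module.End.eigenspace ((T† ∘L T : E →L[𝕜] E) : E →ₗ[𝕜] E) ((‖T‖ ^ 2 : ℝ) : 𝕜) : Set E) :=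
    Set.ext fun x ↦ (T.norm_apply_eq_opNorm_mul_iff x).trans Module.End.mem_eigenspace_iff.symm
  rw [hset, Submodule.span_eq]

theorem norm_inner_map_self_le_of_forall_norm_eq_one (T : E →ₗ[𝕜] E) {r : ℝ}
    (h : ∀ z, ‖z‖ = 1 → ‖⟪z, T z⟫_𝕜‖ ≤ r) (z : E) : ‖⟪z, T z⟫_𝕜‖ ≤ r * ‖z‖ ^ 2 := by
  rcases eq_or_ne z 0 with rfl | hz
  · simp
  have hu := h _ (norm_smul_inv_norm (𝕜 := 𝕜) hz)
  simp only [map_smul, inner_smul_left, inner_smul_right, norm_mul, RCLike.norm_conj,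
    norm_inv, RCLike.norm_ofReal, abs_norm] at hu
  rw [← mul_assoc, ← mul_inv, ← sq, inv_mul_le_iff₀ (by positivity)] at hu
  rwa [mul_comm]

theorem Submodule.two_mul_finrank_le_of_map_mem_orthogonal [FiniteDimensional 𝕜 E]
    (T : E →ₗ[𝕜] E) {V : Submodule 𝕜 E} (hV : ∀ v ∈ V, T v ∈ Vᗮ)
    (hinj : Disjoint V (LinearMap.ker T)) : 2 * Module.finrank 𝕜 V ≤ Module.finrank 𝕜 E := by
  have hle := LinearMap.finrank_le_finrank_of_injective ((T.injective_restrict_iff hV).mpr hinj)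
  have hsum := V.finrank_add_finrank_orthogonal
  omega

end

section Complex
variable {E : Type*} [NormedAddCommGroup E] [InnerProductSpace ℂ E]

open Complex

theorem LinearMap.inner_map_self_add_inner_map_self_eq (T : E →ₗ[ℂ] E) {r : ℝ}
    (hT : ∀ z, ‖⟪z, T z⟫_ℂ‖ ≤ r * ‖z‖ ^ 2) {x y : E}
    (hxy : ⟪y, T x⟫_ℂ = r * (‖x‖ ^ 2 + ‖y‖ ^ 2)) :
    ⟪x, T x⟫_ℂ + ⟪y, T y⟫_ℂ = 2 * r * ⟪x, y⟫_ℂ := by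
  rw [← sub_eq_zero]
  refine Complex.eq_zero_of_forall_re_mul_add_sq_mul_nonpos (β := ⟪x, T y⟫_ℂ) fun c hc ↦ ?_
  have hcc : c * conj c = 1 := by rw [mul_conj', hc]; norm_num
  have hexpand : c * ⟪x + c • y, T (x + c • y)⟫_ℂ
      = c * (⟪x, T x⟫_ℂ + ⟪y, T y⟫_ℂ - 2 * r * ⟪x, y⟫_ℂ) + c ^ 2 * ⟪x, T y⟫_ℂ
        + ((r * (‖x‖ ^ 2 + ‖y‖ ^ 2) : ℝ) : ℂ) + ((2 * r : ℝ) : ℂ) * (c * ⟪x, y⟫_ℂ) := by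
    simp only [map_add, map_smul, inner_add_left, inner_add_right, inner_smul_left,
      inner_smul_right, hxy]
    push_cast
    linear_combination (⟪y, T y⟫_ℂ * c + r * (‖x‖ ^ 2 + ‖y‖ ^ 2)) * hcc
  have hnorm : ‖x + c • y‖ ^ 2 = ‖x‖ ^ 2 + ‖y‖ ^ 2 + 2 * (c * ⟪x, y⟫_ℂ).re := by
    rw [norm_add_sq (𝕜 := ℂ), inner_smul_right, norm_smul, hc, one_mul]
    simp only [RCLike.re_to_complex]
    ring
  have hbound : (c * ⟪x + c • y, T (x + c • y)⟫_ℂ).re ≤ r * ‖x + c • y‖ ^ 2 :=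
    calc _ ≤ ‖c * ⟪x + c • y, T (x + c • y)⟫_ℂ‖ := re_le_norm _
      _ = ‖⟪x + c • y, T (x + c • y)⟫_ℂ‖ := by rw [norm_mul, hc, one_mul]
      _ ≤ _ := hT _
  rw [hexpand, hnorm] at hbound
  simp only [add_re, ofReal_re, re_ofReal_mul] at hbound
  rw [add_re]
  linarith

theorem LinearMap.map_mem_orthogonal_of_inner_map_self_eq_zero (T : E →ₗ[ℂ] E)
    {V : Submodule ℂ E} (hV : ∀ v ∈ V, ⟪v, T v⟫_ℂ = 0) : ∀ v ∈ V, T v ∈ Vᗮ := by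
  have hV' : ∀ w ∈ V, ⟪T w, w⟫_ℂ = 0 := fun w hw ↦ by rw [← inner_conj_symm, hV w hw, map_zero]
  intro v hv
  refine (Submodule.mem_orthogonal' _ _).mpr fun u hu ↦ ?_
  rw [inner_map_polarization, hV' _ (V.add_mem hu hv), hV' _ (V.sub_mem hu hv),
    hV' _ (V.add_mem hu (V.smul_mem _ hv)), hV' _ (V.sub_mem hu (V.smul_mem _ hv))]
  ring

open ContinuousLinearMap in
theorem ContinuousLinearMap.inner_map_self_eq_zero_of_norm_apply_eq [CompleteSpace E]
    (T : E →L[ℂ] E) (hT : ∀ z, ‖⟪z, T z⟫_ℂ‖ ≤ ‖T‖ / 2 * ‖z‖ ^ 2) {x : E}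
    (hx : ‖T x‖ = ‖T‖ * ‖x‖) : ⟪x, T x⟫_ℂ = 0 := by
  set k := ‖T‖
  rcases eq_or_lt_of_le (norm_nonneg T) with hk | hk
  · simp [norm_eq_zero.mp hk.symm]
  set y := ((k : ℂ)⁻¹) • T x
  have hadj : adjoint T (T x) = ((k ^ 2 : ℝ) : ℂ) • x := (T.norm_apply_eq_opNorm_mul_iff x).mp hx
  have hy : ‖y‖ = ‖x‖ := by
    rw [norm_smul, hx, norm_inv, norm_real, Real.norm_of_nonneg hk.le, inv_mul_cancel_left₀ hk.ne']
  have hyx : ⟪y, T x⟫_ℂ = ((k / 2 : ℝ) : ℂ) * (‖x‖ ^ 2 + ‖y‖ ^ 2) := by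
    rw [inner_smul_left, inner_self_eq_norm_sq_to_K, hx, hy]
    simp only [map_inv₀, conj_ofReal, coe_algebraMap, ofReal_mul, ofReal_div, ofReal_ofNat]
    field_simp
    ring
  have hq : ⟪y, T y⟫_ℂ = k * ⟪x, y⟫_ℂ := by
    rw [← adjoint_inner_left, map_smul, hadj, smul_smul, inner_smul_left]
    have hscalar : (k : ℂ)⁻¹ * ((k ^ 2 : ℝ) : ℂ) = k := by push_cast; field_simp
    rw [hscalar, conj_ofReal]
  have hsum := (T : E →ₗ[ℂ] E).inner_map_self_add_inner_map_self_eq hT hyx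
  push_cast at hsum
  linear_combination hsum - hq

end Complex

theorem norm_inner_toCLM_self_le_numRadius {n : ℕ} (A : Matrix (Fin n) (Fin n) ℂ)
    {z : EuclideanSpace ℂ (Fin n)} (hz : ‖z‖ = 1) : ‖⟪z, toCLM A z⟫_ℂ‖ ≤ numRadius A := by
  refine le_csSup ⟨‖toCLM A‖, ?_⟩ ⟨z, hz, rfl⟩
  rintro r ⟨w, hw, rfl⟩
  simpa [hw] using (norm_inner_le_norm w (toCLM A w)).trans
    (mul_le_mul_of_nonneg_left ((toCLM A).le_opNorm w) (norm_nonneg w))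

theorem stmt8 {n : ℕ} (A : Matrix (Fin n) (Fin n) ℂ) (hA : A ≠ 0)
    (h : opNorm A = 2 * numRadius A) :
    2 * Module.finrank ℂ (Submodule.span ℂ
      {x : EuclideanSpace ℂ (Fin n) | ‖toCLM A x‖ = opNorm A * ‖x‖}) ≤ n := by
  have hw : ∀ z : EuclideanSpace ℂ (Fin n), ‖z‖ = 1 → ‖⟪z, toCLM A z⟫_ℂ‖ ≤ opNorm A / 2 :=
    fun z hz ↦ (norm_inner_toCLM_self_le_numRadius A hz).trans_eq (by linarith)
  rw [opNorm] at hw ⊢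
  set T := toCLM A
  have hk : 0 < ‖T‖ := norm_pos_iff.mpr fun hT ↦
    hA (Matrix.toEuclideanCLM.injective (hT.trans (map_zero _).symm))
  have hT := norm_inner_map_self_le_of_forall_norm_eq_one (𝕜 := ℂ) T.toLinearMap hw
  rw [T.span_setOf_norm_apply_eq]
  set V := Module.End.eigenspace (T† ∘L T).toLinearMap ((‖T‖ ^ 2 : ℝ) : ℂ)
  have hV : ∀ v ∈ V, ‖T v‖ = ‖T‖ * ‖v‖ := fun v hv ↦
    (T.norm_apply_eq_opNorm_mul_iff v).mpr (Module.End.mem_eigenspace_iff.mp hv)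
  refine (Submodule.two_mul_finrank_le_of_map_mem_orthogonal T.toLinearMap ?_ ?_).trans_eq
    finrank_euclideanSpace_fin
  · exact LinearMap.map_mem_orthogonal_of_inner_map_self_eq_zero _ fun v hv ↦
      T.inner_map_self_eq_zero_of_norm_apply_eq hT (hV v hv)
  · refine Submodule.disjoint_def.mpr fun v hv hker ↦ ?_
    have hnorm := hV v hv
    have hTv : T v = 0 := hker
    rw [hTv, norm_zero, eq_comm, mul_eq_zero] at hnorm
    exact norm_eq_zero.mp (hnorm.resolve_left hk.ne')
end

section
/- Let A ∈ ℂ^{n×n} with ‖A‖ = 2·r(A). Then the maximum right singular subspace V_max(A) is contained in ker(A*) ∩ range(A*), and the maximum left singular subspace U_max(A) is contained in ker(A) ∩ range(A); in particular V_max(A) ⊥ U_max(A) and A is singular. -/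
open scoped InnerProductSpace

/-! If `|⟪x, T x⟫| ≤ w ‖x‖²`, then for every unimodular `θ` the self-adjoint operator
`θ T + θ̄ T*` has quadratic form `2 Re (θ̄ ⟪T x, x⟫)`, so `‖θ T + θ̄ T*‖ ≤ 2w`; with `θ = 1, i`
this bounds `‖T ± T*‖` by `2w = ‖T‖`. For a maximal right singular vector `v`, i.e.
`‖T v‖ = ‖T‖ ‖v‖`, the parallelogram law for `T v ± T* v` then forces `T* v = 0`, and
`T* T v = ‖T‖² v` puts `v` in the range of `T*`. The same argument for `T*` handles the left
singular vectors, and a norm-attaining unit vector lies in `ker T*`, so `A` is singular. -/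

section Scalar
open ContinuousLinearMap RCLike
variable {𝕜 E F : Type*} [RCLike 𝕜] [NormedAddCommGroup E] [InnerProductSpace 𝕜 E]

lemma norm_inner_self_le_of_forall_norm_eq_one (T : E →L[𝕜] E) {w : ℝ}
    (hw : ∀ z : E, ‖z‖ = 1 → ‖⟪z, T z⟫_𝕜‖ ≤ w) (x : E) : ‖⟪x, T x⟫_𝕜‖ ≤ w * ‖x‖ ^ 2 := by
  rcases eq_or_ne x 0 with rfl | hx
  · simp
  have hx' : (‖x‖ : 𝕜) ≠ 0 := ofReal_ne_zero.2 (norm_ne_zero_iff.2 hx)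
  set z : E := (‖x‖⁻¹ : 𝕜) • x
  have hxz : x = (‖x‖ : 𝕜) • z := by simp [z, smul_smul, hx']
  have hz : ‖z‖ = 1 := by simp [z, norm_smul, norm_ne_zero_iff.2 hx]
  rw [hxz, map_smul, inner_smul_left, inner_smul_right, norm_mul, norm_mul, norm_conj,
    norm_ofReal, abs_norm, ← hxz]
  nlinarith [hw z hz, norm_nonneg x]

lemma norm_le_of_isSymmetric_of_abs_re_inner_le {S : E →L[𝕜] E}
    (hS : (S : E →ₗ[𝕜] E).IsSymmetric) {c : ℝ} (hc : 0 ≤ c)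
    (h : ∀ x : E, |re ⟪S x, x⟫_𝕜| ≤ c * ‖x‖ ^ 2) : ‖S‖ ≤ c := by
  rw [S.norm_eq_iSup_rayleighQuotient hS]
  refine ciSup_le fun x ↦ ?_
  rw [rayleighQuotient, reApplyInnerSelf_apply, abs_div, abs_sq]
  exact div_le_of_le_mul₀ (sq_nonneg _) hc (h x)

variable [NormedAddCommGroup F] [InnerProductSpace 𝕜 F] [CompleteSpace E] [CompleteSpace F]

lemma adjoint_apply_apply_of_norm_apply_eq (T : E →L[𝕜] F) {v : E}
    (hv : ‖T v‖ = ‖T‖ * ‖v‖) : adjoint T (T v) = ((‖T‖ ^ 2 : ℝ) : 𝕜) • v := by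
  set s := ‖T‖
  have hbound : ‖adjoint T (T v)‖ ≤ s ^ 2 * ‖v‖ := calc
    ‖adjoint T (T v)‖ ≤ s * ‖T v‖ := by
      simpa only [LinearIsometryEquiv.norm_map] using (adjoint T).le_opNorm (T v)
    _ = s ^ 2 * ‖v‖ := by rw [hv]; ring
  have hinner : re ⟪adjoint T (T v), ((s ^ 2 : ℝ) : 𝕜) • v⟫_𝕜 = (s ^ 2 * ‖v‖) ^ 2 := by
    rw [inner_smul_right, re_ofReal_mul, adjoint_inner_left, inner_self_eq_norm_sq, hv]
    ring
  have hsq : ‖adjoint T (T v) - ((s ^ 2 : ℝ) : 𝕜) • v‖ ^ 2 ≤ 0 := by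
    have hsv : ‖((s ^ 2 : ℝ) : 𝕜) • v‖ = s ^ 2 * ‖v‖ := by
      rw [norm_smul, norm_ofReal, abs_of_nonneg (sq_nonneg s)]
    rw [@norm_sub_sq 𝕜, hinner, hsv]
    nlinarith [norm_nonneg (adjoint T (T v))]
  exact sub_eq_zero.1 <| norm_eq_zero.1 <| pow_eq_zero_iff two_ne_zero |>.1 <|
    hsq.antisymm (sq_nonneg _)

lemma mem_range_adjoint_of_norm_apply_eq {T : E →L[𝕜] F} (hT : T ≠ 0) {v : E}
    (hv : ‖T v‖ = ‖T‖ * ‖v‖) : v ∈ LinearMap.range (adjoint T : F →ₗ[𝕜] E) := by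
  have hs : ((‖T‖ ^ 2 : ℝ) : 𝕜) ≠ 0 := ofReal_ne_zero.2 (pow_ne_zero 2 (norm_ne_zero_iff.2 hT))
  refine ⟨((‖T‖ ^ 2 : ℝ) : 𝕜)⁻¹ • T v, ?_⟩
  rw [coe_coe, map_smul, adjoint_apply_apply_of_norm_apply_eq T hv, smul_smul,
    inv_mul_cancel₀ hs, one_smul]

lemma adjoint_apply_eq_zero_of_norm_add_adjoint_le {T : E →L[𝕜] E} {s : ℝ}
    (h_add : ‖T + adjoint T‖ ≤ s) (h_sub : ‖T - adjoint T‖ ≤ s) {v : E} (hv : ‖T v‖ = s * ‖v‖) :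
    adjoint T v = 0 := by
  have e_add : ‖T v + adjoint T v‖ ≤ s * ‖v‖ :=
    ((T + adjoint T).le_opNorm v).trans (mul_le_mul_of_nonneg_right h_add (norm_nonneg v))
  have e_sub : ‖T v - adjoint T v‖ ≤ s * ‖v‖ :=
    ((T - adjoint T).le_opNorm v).trans (mul_le_mul_of_nonneg_right h_sub (norm_nonneg v))
  have hpar := parallelogram_law_with_norm 𝕜 (T v) (adjoint T v)
  rw [hv] at hpar
  have hsq : ‖adjoint T v‖ ^ 2 ≤ 0 := by
    linarith [pow_le_pow_left₀ (norm_nonneg _) e_add 2, pow_le_pow_left₀ (norm_nonneg _) e_sub 2]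
  exact norm_eq_zero.1 (pow_eq_zero_iff two_ne_zero |>.1 (hsq.antisymm (sq_nonneg _)))

omit [CompleteSpace F] in
lemma norm_inner_adjoint_apply_self (T : E →L[𝕜] E) (x : E) :
    ‖⟪x, adjoint T x⟫_𝕜‖ = ‖⟪x, T x⟫_𝕜‖ := by
  rw [adjoint_inner_right, norm_inner_symm]

omit [CompleteSpace E] [CompleteSpace F] in
lemma exists_norm_eq_one_and_norm_apply_eq_opNorm [FiniteDimensional 𝕜 E] [Nontrivial E]
    (T : E →L[𝕜] F) : ∃ x : E, ‖x‖ = 1 ∧ ‖T x‖ = ‖T‖ := by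
  have := FiniteDimensional.proper_rclike 𝕜 E
  let _ : NormedSpace ℝ E := NormedSpace.restrictScalars ℝ 𝕜 E
  have hK := (isCompact_sphere (0 : E) 1).image_of_continuousOn T.continuous.norm.continuousOn
  obtain ⟨x, hx, hTx⟩ := hK.sSup_mem ((NormedSpace.sphere_nonempty.2 zero_le_one).image _)
  exact ⟨x, by simpa using hx, hTx.trans T.sSup_sphere_eq_norm⟩

end Scalar

section Complex
open ContinuousLinearMap RCLike ComplexConjugate
variable {E : Type*} [NormedAddCommGroup E] [InnerProductSpace ℂ E] [CompleteSpace E]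

lemma norm_smul_add_conj_smul_adjoint_le (T : E →L[ℂ] E) {w : ℝ} (hw0 : 0 ≤ w)
    (hw : ∀ x : E, ‖⟪x, T x⟫_ℂ‖ ≤ w * ‖x‖ ^ 2) {θ : ℂ} (hθ : ‖θ‖ = 1) :
    ‖θ • T + conj θ • adjoint T‖ ≤ 2 * w := by
  refine norm_le_of_isSymmetric_of_abs_re_inner_le ?_ (by positivity) fun x ↦ ?_
  · rw [← isSelfAdjoint_iff_isSymmetric, IsSelfAdjoint]
    simp only [star_add, star_smul, star_eq_adjoint, adjoint_adjoint]
    simp [add_comm]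
  set z := ⟪x, T x⟫_ℂ
  calc |re ⟪(θ • T + conj θ • adjoint T) x, x⟫_ℂ|
      ≤ ‖⟪(θ • T + conj θ • adjoint T) x, x⟫_ℂ‖ := abs_re_le_norm _
    _ = ‖conj θ * conj z + θ * z‖ := by
      rw [add_apply, smul_apply, smul_apply, inner_add_left, inner_smul_left, inner_smul_left,
        adjoint_inner_left, ← inner_conj_symm (T x) x, conj_conj]
    _ ≤ ‖θ‖ * ‖z‖ + ‖θ‖ * ‖z‖ := by
      refine (norm_add_le _ _).trans_eq ?_
      rw [norm_mul, norm_mul, norm_conj, norm_conj]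
    _ ≤ 2 * w * ‖x‖ ^ 2 := by rw [hθ]; linarith [hw x]

lemma norm_add_adjoint_le (T : E →L[ℂ] E) {w : ℝ} (hw0 : 0 ≤ w)
    (hw : ∀ x : E, ‖⟪x, T x⟫_ℂ‖ ≤ w * ‖x‖ ^ 2) : ‖T + adjoint T‖ ≤ 2 * w := by
  simpa using norm_smul_add_conj_smul_adjoint_le T hw0 hw norm_one

lemma norm_sub_adjoint_le (T : E →L[ℂ] E) {w : ℝ} (hw0 : 0 ≤ w)
    (hw : ∀ x : E, ‖⟪x, T x⟫_ℂ‖ ≤ w * ‖x‖ ^ 2) : ‖T - adjoint T‖ ≤ 2 * w := by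
  have h := norm_smul_add_conj_smul_adjoint_le T hw0 hw Complex.norm_I
  rwa [Complex.conj_I, neg_smul, ← sub_eq_add_neg, ← smul_sub, norm_smul, Complex.norm_I,
    one_mul] at h

theorem adjoint_apply_eq_zero_and_mem_range_adjoint {T : E →L[ℂ] E} (hT : T ≠ 0) {w : ℝ}
    (hw : ∀ x : E, ‖⟪x, T x⟫_ℂ‖ ≤ w * ‖x‖ ^ 2) (h : ‖T‖ = 2 * w) {v : E}
    (hv : ‖T v‖ = ‖T‖ * ‖v‖) :
    adjoint T v = 0 ∧ v ∈ LinearMap.range (adjoint T : E →ₗ[ℂ] E) := by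
  have hw0 : 0 ≤ w := by linarith [norm_nonneg T]
  refine ⟨adjoint_apply_eq_zero_of_norm_add_adjoint_le ?_ ?_ hv,
    mem_range_adjoint_of_norm_apply_eq hT hv⟩
  · exact h ▸ norm_add_adjoint_le T hw0 hw
  · exact h ▸ norm_sub_adjoint_le T hw0 hw

theorem apply_eq_zero_and_mem_range_of_norm_adjoint_apply_eq {T : E →L[ℂ] E} (hT : T ≠ 0)
    {w : ℝ} (hw : ∀ x : E, ‖⟪x, T x⟫_ℂ‖ ≤ w * ‖x‖ ^ 2) (h : ‖T‖ = 2 * w) {u : E}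
    (hu : ‖adjoint T u‖ = ‖T‖ * ‖u‖) : T u = 0 ∧ u ∈ LinearMap.range (T : E →ₗ[ℂ] E) := by
  have hT' : adjoint T ≠ 0 := by simpa using hT
  have hw' (x : E) := (norm_inner_adjoint_apply_self T x).trans_le (hw x)
  rw [← LinearIsometryEquiv.norm_map adjoint T] at h hu
  simpa only [adjoint_adjoint] using adjoint_apply_eq_zero_and_mem_range_adjoint hT' hw' h hu

theorem not_isUnit_of_norm_eq_two_mul [FiniteDimensional ℂ E] {T : E →L[ℂ] E} (hT : T ≠ 0)
    {w : ℝ} (hw : ∀ x : E, ‖⟪x, T x⟫_ℂ‖ ≤ w * ‖x‖ ^ 2) (h : ‖T‖ = 2 * w) : ¬ IsUnit T := by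
  have : Nontrivial E := by
    by_contra hE
    rw [not_nontrivial_iff_subsingleton] at hE
    exact hT (Subsingleton.elim _ _)
  obtain ⟨x, hx, hTx⟩ := exists_norm_eq_one_and_norm_apply_eq_opNorm T
  have hx0 : adjoint T x = 0 :=
    (adjoint_apply_eq_zero_and_mem_range_adjoint hT hw h (by rw [hTx, hx, mul_one])).1
  intro hU
  have hinj := (isUnit_iff_bijective.1 (star_eq_adjoint T ▸ hU.star)).1
  rw [← map_zero (adjoint T)] at hx0
  simp [hinj hx0] at hx

end Complex

lemma norm_inner_toCLM_apply_self_le {n : ℕ} (A : Matrix (Fin n) (Fin n) ℂ)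
    (x : EuclideanSpace ℂ (Fin n)) : ‖⟪x, toCLM A x⟫_ℂ‖ ≤ numRadius A * ‖x‖ ^ 2 := by
  have hbdd : BddAbove {r : ℝ | ∃ z : EuclideanSpace ℂ (Fin n), ‖z‖ = 1 ∧
      r = ‖⟪z, toCLM A z⟫_ℂ‖} := by
    refine ⟨‖toCLM A‖, ?_⟩
    rintro r ⟨z, hz, rfl⟩
    calc ‖⟪z, toCLM A z⟫_ℂ‖ ≤ ‖z‖ * ‖toCLM A z‖ := norm_inner_le_norm _ _
      _ ≤ ‖toCLM A‖ := by simpa [hz] using (toCLM A).le_opNorm z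
  exact norm_inner_self_le_of_forall_norm_eq_one _ (fun z hz ↦ le_csSup hbdd ⟨z, hz, rfl⟩) x

theorem stmt9 {n : ℕ} (A : Matrix (Fin n) (Fin n) ℂ) (hA : A ≠ 0)
    (h : opNorm A = 2 * numRadius A) :
    (∀ v : EuclideanSpace ℂ (Fin n), ‖toCLM A v‖ = opNorm A * ‖v‖ →
      ContinuousLinearMap.adjoint (toCLM A) v = 0 ∧
        v ∈ LinearMap.range (ContinuousLinearMap.adjoint (toCLM A) : EuclideanSpace ℂ (Fin n) →ₗ[ℂ] EuclideanSpace ℂ (Fin n))) ∧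
    (∀ u : EuclideanSpace ℂ (Fin n), ‖ContinuousLinearMap.adjoint (toCLM A) u‖ = opNorm A * ‖u‖ →
      toCLM A u = 0 ∧ u ∈ LinearMap.range (toCLM A : EuclideanSpace ℂ (Fin n) →ₗ[ℂ] EuclideanSpace ℂ (Fin n))) ∧
    (∀ v u : EuclideanSpace ℂ (Fin n), ‖toCLM A v‖ = opNorm A * ‖v‖ →
      ‖ContinuousLinearMap.adjoint (toCLM A) u‖ = opNorm A * ‖u‖ → ⟪v, u⟫_ℂ = 0) ∧
    ¬ IsUnit A := by
  have hT : toCLM A ≠ 0 := (map_ne_zero_iff _ (Matrix.toEuclideanCLM (𝕜 := ℂ)).injective).2 hA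
  have hw := norm_inner_toCLM_apply_self_le A
  have right (v : EuclideanSpace ℂ (Fin n)) (hv : ‖toCLM A v‖ = opNorm A * ‖v‖) :=
    adjoint_apply_eq_zero_and_mem_range_adjoint hT hw h hv
  have left (u : EuclideanSpace ℂ (Fin n))
      (hu : ‖ContinuousLinearMap.adjoint (toCLM A) u‖ = opNorm A * ‖u‖) :=
    apply_eq_zero_and_mem_range_of_norm_adjoint_apply_eq hT hw h hu
  refine ⟨right, left, fun v u hv hu ↦ ?_, fun hU ↦ ?_⟩
  · obtain ⟨-, y, rfl⟩ := right v hv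
    rw [ContinuousLinearMap.coe_coe, ContinuousLinearMap.adjoint_inner_left, (left u hu).1,
      inner_zero_right]
  · exact not_isUnit_of_norm_eq_two_mul hT hw h (hU.map (Matrix.toEuclideanCLM (𝕜 := ℂ)))
end
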